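/- Let a > 0, θ ∈ (0, π/2) and θ₀ ∈ [θ, π/2). Then for every w ∈ ℂ with w ≠ 0 and θ − θ₀ ≤ Arg(w) ≤ θ₀, and for every s ∈ ℝ, one has |R(w, τ_θ(s) − a)|² ≥ cos(θ₀) · (|w|² + |τ_θ(s) − a|²), where R(ŵ,ζ) := (ŵ² + ζ²)^{1/2}. -/

import Mathlib

open Complex Real

/-!
Put `ζ = τ_θ(s) - a`. Up to sign, `ζ` is a nonnegative combination `x + t e^{iθ}`, so its square is
`|ζ|² e^{iβ}` with `β ∈ [0, 2θ]`, while `w² = |w|² e^{2i Arg w}` with `2 Arg w ∈ [2θ - 2θ₀, 2θ₀]`.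
The two angles thus differ by at most `2θ₀`, and projecting `w² + ζ²` onto the bisector of
`e^{2i Arg w}` and `e^{iβ}` gives `|R(w, ζ)|² = |w² + ζ²| ≥ cos θ₀ (|w|² + |ζ|²)`.
-/

/-- The complex path `τ_θ` associated with the square `(-a,a)²`. -/
noncomputable def tauPath (a θ s : ℝ) : ℂ :=
  if s < -a then -(a : ℂ) + ((s + a : ℝ) : ℂ) * Complex.exp (θ * Complex.I)
  else if s ≤ a then (s : ℂ)
  else (a : ℂ) + ((s - a : ℝ) : ℂ) * Complex.exp (θ * Complex.I)

/-- The principal square root `R(ŵ,ζ) := (ŵ² + ζ²)^{1/2}`. -/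
noncomputable def Rc (w ζ : ℂ) : ℂ := (w ^ 2 + ζ ^ 2) ^ ((1 : ℂ) / 2)

namespace Complex

lemma norm_cpow_one_div_two_sq (z : ℂ) : ‖z ^ ((1 : ℂ) / 2)‖ ^ 2 = ‖z‖ := by
  rw [one_div, show (2 : ℂ) = ((2 : ℕ) : ℂ) by norm_num, norm_cpow_inv_nat]
  exact Real.rpow_inv_natCast_pow (norm_nonneg z) two_ne_zero

lemma sq_eq_norm_sq_mul_exp_two_arg (z : ℂ) :
    z ^ 2 = ((‖z‖ ^ 2 : ℝ) : ℂ) * exp (((2 * arg z : ℝ) : ℂ) * I) := by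
  conv_lhs => rw [← norm_mul_exp_arg_mul_I z]
  rw [mul_pow, ← exp_nat_mul]
  push_cast
  ring_nf

lemma cos_half_sub_mul_add_le_norm (r₁ r₂ A B : ℝ) :
    Real.cos ((A - B) / 2) * (r₁ + r₂) ≤
      ‖(r₁ : ℂ) * exp ((A : ℂ) * I) + (r₂ : ℂ) * exp ((B : ℂ) * I)‖ := by
  set z := (r₁ : ℂ) * exp ((A : ℂ) * I) + (r₂ : ℂ) * exp ((B : ℂ) * I)
  have hrot : exp ((-((A + B) / 2) : ℝ) * I) * z =
      (r₁ : ℂ) * exp (((A - B) / 2 : ℝ) * I) + (r₂ : ℂ) * exp ((-((A - B) / 2) : ℝ) * I) := by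
    simp only [z, mul_add, mul_left_comm _ (r₁ : ℂ), mul_left_comm _ (r₂ : ℂ), ← exp_add]
    push_cast
    ring_nf
  calc Real.cos ((A - B) / 2) * (r₁ + r₂)
      = (exp ((-((A + B) / 2) : ℝ) * I) * z).re := by
        rw [hrot, add_re, re_ofReal_mul, re_ofReal_mul, exp_ofReal_mul_I_re,
          exp_ofReal_mul_I_re, Real.cos_neg]
        ring
    _ ≤ ‖exp ((-((A + B) / 2) : ℝ) * I) * z‖ := re_le_norm _
    _ = ‖z‖ := by rw [norm_mul, norm_exp_ofReal_mul_I, one_mul]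

lemma arg_add_mul_exp_mem_Icc {x t θ : ℝ} (hx : 0 ≤ x) (ht : 0 ≤ t) (hθ : 0 ≤ θ)
    (hθ' : θ < π / 2) : arg (x + t * exp (θ * I)) ∈ Set.Icc 0 θ := by
  set u : ℂ := x + t * exp (θ * I)
  have hre : u.re = x + t * Real.cos θ := by simp [u, exp_ofReal_mul_I_re]
  have him : u.im = t * Real.sin θ := by simp [u, exp_ofReal_mul_I_im]
  have hcos : 0 < Real.cos θ := Real.cos_pos_of_mem_Ioo ⟨by linarith, hθ'⟩
  have hsin : 0 ≤ Real.sin θ := Real.sin_nonneg_of_nonneg_of_le_pi hθ (by linarith [pi_pos])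
  refine ⟨arg_nonneg_iff.2 (him ▸ mul_nonneg ht hsin), ?_⟩
  rcases (show 0 ≤ u.re by rw [hre]; positivity).eq_or_lt with hre0 | hre0
  · have hx0 : x = 0 := by nlinarith
    have ht0 : t = 0 := by nlinarith
    simp [u, hx0, ht0, hθ]
  · by_contra! hlt
    have htan := Real.tan_lt_tan_of_nonneg_of_lt_pi_div_two hθ
      (arg_lt_pi_div_two_iff.2 (Or.inl hre0)) hlt
    rw [Real.tan_eq_sin_div_cos, tan_arg, div_lt_div_iff₀ hcos hre0, hre, him] at htan
    nlinarith [mul_nonneg hx hsin]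

end Complex

lemma exists_tauPath_sub_eq {a : ℝ} (ha : 0 ≤ a) (θ s : ℝ) :
    ∃ x t : ℝ, 0 ≤ x ∧ 0 ≤ t ∧
      (tauPath a θ s - a = x + t * exp (θ * I) ∨
        tauPath a θ s - a = -(x + t * exp (θ * I))) := by
  unfold tauPath
  split_ifs with h₁ h₂
  · refine ⟨2 * a, -(s + a), by positivity, by linarith, Or.inr ?_⟩
    push_cast
    ring
  · refine ⟨a - s, 0, by linarith, le_rfl, Or.inr ?_⟩
    push_cast
    ring
  · refine ⟨0, s - a, le_rfl, by linarith, Or.inl ?_⟩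
    push_cast
    ring

theorem stmt_6_general (a θ θ₀ : ℝ) (ha : 0 < a) (hθ₀' : 0 < θ) (hθ₁ : θ < π / 2)
    (hθ₀ : θ₀ < π / 2)
    (w : ℂ) (harg₁ : θ - θ₀ ≤ w.arg) (harg₂ : w.arg ≤ θ₀) (s : ℝ) :
    Real.cos θ₀ * (‖w‖ ^ 2 + ‖tauPath a θ s - (a : ℂ)‖ ^ 2) ≤
      ‖Rc w (tauPath a θ s - (a : ℂ))‖ ^ 2 := by
  obtain ⟨x, t, hx, ht, hζ⟩ := exists_tauPath_sub_eq ha.le θ s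
  set u : ℂ := x + t * exp (θ * I)
  have hζu : (tauPath a θ s - a) ^ 2 = u ^ 2 ∧ ‖tauPath a θ s - a‖ = ‖u‖ := by
    rcases hζ with h | h <;> simp [h]
  obtain ⟨hu₀, huθ⟩ := arg_add_mul_exp_mem_Icc hx ht hθ₀'.le hθ₁
  have hangle : |(2 * w.arg - 2 * u.arg) / 2| ≤ θ₀ := abs_le.2 ⟨by linarith, by linarith⟩
  have hcos : Real.cos θ₀ ≤ Real.cos ((2 * w.arg - 2 * u.arg) / 2) := by
    rw [← Real.cos_abs ((2 * w.arg - 2 * u.arg) / 2)]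
    exact Real.cos_le_cos_of_nonneg_of_le_pi (abs_nonneg _) (by linarith [pi_pos]) hangle
  rw [Rc, norm_cpow_one_div_two_sq, hζu.1, hζu.2, sq_eq_norm_sq_mul_exp_two_arg w,
    sq_eq_norm_sq_mul_exp_two_arg u]
  calc Real.cos θ₀ * (‖w‖ ^ 2 + ‖u‖ ^ 2)
      ≤ Real.cos ((2 * w.arg - 2 * u.arg) / 2) * (‖w‖ ^ 2 + ‖u‖ ^ 2) := by gcongr
    _ ≤ _ := cos_half_sub_mul_add_le_norm _ _ _ _

/-- Let `a > 0`, `θ ∈ (0, π/2)`, `θ₀ ∈ [θ, π/2)`. Then for every `w ≠ 0` with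
`θ − θ₀ ≤ Arg w ≤ θ₀` and every `s ∈ ℝ`,
`|R(w, τ_θ(s) − a)|² ≥ cos θ₀ · (|w|² + |τ_θ(s) − a|²)`. -/
theorem stmt_6 (a θ θ₀ : ℝ) (ha : 0 < a) (hθ₀' : 0 < θ) (hθ₁ : θ < π / 2)
    (hθθ₀ : θ ≤ θ₀) (hθ₀ : θ₀ < π / 2)
    (w : ℂ) (hw : w ≠ 0) (harg₁ : θ - θ₀ ≤ w.arg) (harg₂ : w.arg ≤ θ₀) (s : ℝ) :
    Real.cos θ₀ * (‖w‖ ^ 2 + ‖tauPath a θ s - (a : ℂ)‖ ^ 2) ≤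
      ‖Rc w (tauPath a θ s - (a : ℂ))‖ ^ 2 :=
  stmt_6_general a θ θ₀ ha hθ₀' hθ₁ hθ₀ w harg₁ harg₂ s
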